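/- arXiv:1106.2987 — 4 statements merged into one kernel-verified Lean document; each statement's English description precedes it below -/
import Mathlib

section
/- Let G be a nontrivial connected simple graph (i.e. |V(G)| ≥ 2) and let w be a vertex of G. For nonnegative integers p and q, let G(p,q) denote the graph obtained from G by attaching to the vertex w two pendant paths P = w v₁ v₂ … v_p and Q = w u₁ u₂ … u_q of lengths p and q respectively. If p ≥ q ≥ 1, then ecc(G(p,q)) < ecc(G(p+1,q−1)). -/
open SimpleGraph

/-- The eccentricity of a vertex: the maximum distance from it to any other vertex. -/
noncomputable def eccentricity {V : Type*} [Fintype V] (G : SimpleGraph V) (v : V) : ℕ :=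
  Finset.univ.sup fun u => G.dist v u

/-- The average eccentricity of a graph. -/
noncomputable def avgEcc {V : Type*} [Fintype V] (G : SimpleGraph V) : ℝ :=
  (∑ v : V, (eccentricity G v : ℝ)) / (Fintype.card V : ℝ)

/-- `G(p, q)`: the graph obtained from `G` by attaching at the vertex `w` two pendant
paths `w - v₁ - ⋯ - vₚ` and `w - u₁ - ⋯ - u_q` of lengths `p` and `q`. -/
def attachTwoPaths {V : Type*} (G : SimpleGraph V) (w : V) (p q : ℕ) :
    SimpleGraph (V ⊕ (Fin p ⊕ Fin q)) :=
  SimpleGraph.fromRel (fun x y =>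
    (∃ a b, G.Adj a b ∧ x = Sum.inl a ∧ y = Sum.inl b) ∨
    (∃ j : Fin p, (j : ℕ) = 0 ∧ x = Sum.inl w ∧ y = Sum.inr (Sum.inl j)) ∨
    (∃ j j' : Fin p, (j : ℕ) + 1 = (j' : ℕ) ∧
      x = Sum.inr (Sum.inl j) ∧ y = Sum.inr (Sum.inl j')) ∨
    (∃ j : Fin q, (j : ℕ) = 0 ∧ x = Sum.inl w ∧ y = Sum.inr (Sum.inr j)) ∨
    (∃ j j' : Fin q, (j : ℕ) + 1 = (j' : ℕ) ∧
      x = Sum.inr (Sum.inr j) ∧ y = Sum.inr (Sum.inr j')))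


-- walk Lipschitz lemma
lemma walk_lip {W : Type*} {H : SimpleGraph W} (f : W → ℤ)
    (hf : ∀ x y, H.Adj x y → |f x - f y| ≤ 1) :
    ∀ {u v : W} (Wk : H.Walk u v), |f u - f v| ≤ Wk.length := by
  intro u v Wk
  induction Wk with
  | nil => simp
  | cons h Wk ih =>
    calc |f _ - f _| ≤ |f _ - f _| + |f _ - f _| := abs_sub_le _ _ _
    _ ≤ 1 + Wk.length := add_le_add (hf _ _ h) ih
    _ = _ := by push_cast [SimpleGraph.Walk.length_cons]; ring

lemma dist_ge_lip {W : Type*} {H : SimpleGraph W} (f : W → ℤ)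
    (hf : ∀ x y, H.Adj x y → |f x - f y| ≤ 1) {u v : W} (h : H.Reachable u v) :
    |f u - f v| ≤ H.dist u v := by
  obtain ⟨Wk, hW⟩ := h.exists_walk_length_eq_dist
  exact hW ▸ walk_lip f hf Wk


namespace AttachAux

variable {V : Type*} {G : SimpleGraph V} {w : V} {p q : ℕ}

def pot (w : V) (p q : ℕ) (g : V → ℤ) (sP sQ : ℤ) : V ⊕ (Fin p ⊕ Fin q) → ℤ
  | Sum.inl a => g a
  | Sum.inr (Sum.inl i) => g w + sP * ((i : ℕ) + 1)
  | Sum.inr (Sum.inr j) => g w + sQ * ((j : ℕ) + 1)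

lemma abs_helper (a b s : ℤ) (h : b = a + s) (hs : |s| ≤ 1) : |a - b| ≤ 1 := by
  subst h; rw [show a - (a + s) = -s by ring, abs_neg]; exact hs

lemma pot_lip (g : V → ℤ) (sP sQ : ℤ)
    (hg : ∀ a b, G.Adj a b → |g a - g b| ≤ 1) (hsP : |sP| ≤ 1) (hsQ : |sQ| ≤ 1) :
    ∀ x y, (attachTwoPaths G w p q).Adj x y →
      |pot w p q g sP sQ x - pot w p q g sP sQ y| ≤ 1 := by
  have key : ∀ x y, ((∃ a b, G.Adj a b ∧ x = Sum.inl a ∧ y = Sum.inl b) ∨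
      (∃ j : Fin p, (j : ℕ) = 0 ∧ x = Sum.inl w ∧ y = Sum.inr (Sum.inl j)) ∨
      (∃ j j' : Fin p, (j : ℕ) + 1 = (j' : ℕ) ∧
        x = Sum.inr (Sum.inl j) ∧ y = Sum.inr (Sum.inl j')) ∨
      (∃ j : Fin q, (j : ℕ) = 0 ∧ x = Sum.inl w ∧ y = Sum.inr (Sum.inr j)) ∨
      (∃ j j' : Fin q, (j : ℕ) + 1 = (j' : ℕ) ∧
        x = Sum.inr (Sum.inr j) ∧ y = Sum.inr (Sum.inr j'))) →
      |pot w p q g sP sQ x - pot w p q g sP sQ y| ≤ 1 := by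
    rintro x y (⟨a, b, hab, rfl, rfl⟩ | ⟨j, hj, rfl, rfl⟩ | ⟨j, j', hj, rfl, rfl⟩ |
      ⟨j, hj, rfl, rfl⟩ | ⟨j, j', hj, rfl, rfl⟩)
    · exact hg a b hab
    · refine abs_helper _ _ sP ?_ hsP
      simp only [pot]
      have : ((j : ℕ) : ℤ) = 0 := by exact_mod_cast hj
      rw [this]; ring
    · refine abs_helper _ _ sP ?_ hsP
      simp only [pot]
      have : ((j' : ℕ) : ℤ) = ((j : ℕ) : ℤ) + 1 := by exact_mod_cast hj.symm
      rw [this]; ring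
    · refine abs_helper _ _ sQ ?_ hsQ
      simp only [pot]
      have : ((j : ℕ) : ℤ) = 0 := by exact_mod_cast hj
      rw [this]; ring
    · refine abs_helper _ _ sQ ?_ hsQ
      simp only [pot]
      have : ((j' : ℕ) : ℤ) = ((j : ℕ) : ℤ) + 1 := by exact_mod_cast hj.symm
      rw [this]; ring
  intro x y h
  rw [attachTwoPaths, fromRel_adj] at h
  obtain ⟨-, h | h⟩ := h
  · exact key x y h
  · rw [abs_sub_comm]; exact key y x h


lemma adj_inl {a b : V} (h : G.Adj a b) :
    (attachTwoPaths G w p q).Adj (Sum.inl a) (Sum.inl b) := by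
  rw [attachTwoPaths, fromRel_adj]
  exact ⟨by simp [h.ne], Or.inl (Or.inl ⟨a, b, h, rfl, rfl⟩)⟩

lemma adj_wP0 (i : Fin p) (hi : (i : ℕ) = 0) :
    (attachTwoPaths G w p q).Adj (Sum.inl w) (Sum.inr (Sum.inl i)) := by
  rw [attachTwoPaths, fromRel_adj]
  exact ⟨by simp, Or.inl (Or.inr (Or.inl ⟨i, hi, rfl, rfl⟩))⟩

lemma adj_PP (i i' : Fin p) (h : (i : ℕ) + 1 = (i' : ℕ)) :
    (attachTwoPaths G w p q).Adj (Sum.inr (Sum.inl i)) (Sum.inr (Sum.inl i')) := by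
  rw [attachTwoPaths, fromRel_adj]
  refine ⟨by simp [Fin.ext_iff]; omega, Or.inl (Or.inr (Or.inr (Or.inl ⟨i, i', h, rfl, rfl⟩)))⟩

lemma adj_wQ0 (j : Fin q) (hj : (j : ℕ) = 0) :
    (attachTwoPaths G w p q).Adj (Sum.inl w) (Sum.inr (Sum.inr j)) := by
  rw [attachTwoPaths, fromRel_adj]
  exact ⟨by simp, Or.inl (Or.inr (Or.inr (Or.inr (Or.inl ⟨j, hj, rfl, rfl⟩))))⟩

lemma adj_QQ (j j' : Fin q) (h : (j : ℕ) + 1 = (j' : ℕ)) :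
    (attachTwoPaths G w p q).Adj (Sum.inr (Sum.inr j)) (Sum.inr (Sum.inr j')) := by
  rw [attachTwoPaths, fromRel_adj]
  refine ⟨by simp [Fin.ext_iff]; omega, Or.inl (Or.inr (Or.inr (Or.inr (Or.inr ⟨j, j', h, rfl, rfl⟩))))⟩

lemma exists_walk_inl {a b : V} (Wk : G.Walk a b) :
    ∃ W : (attachTwoPaths G w p q).Walk (Sum.inl a) (Sum.inl b), W.length = Wk.length := by
  induction Wk with
  | nil => exact ⟨Walk.nil, rfl⟩
  | cons h Wk ih =>
    obtain ⟨W, hW⟩ := ih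
    exact ⟨Walk.cons (adj_inl h) W, by simp [hW]⟩

lemma exists_walk_wP' : ∀ (n : ℕ) (hn : n < p),
    ∃ Wk : (attachTwoPaths G w p q).Walk (Sum.inl w) (Sum.inr (Sum.inl ⟨n, hn⟩)),
      Wk.length = n + 1 := by
  intro n
  induction n with
  | zero => exact fun hn => ⟨(adj_wP0 ⟨0, hn⟩ rfl).toWalk, by simp⟩
  | succ n ih =>
    intro hn
    obtain ⟨Wk, hW⟩ := ih (by omega)
    exact ⟨Wk.concat (adj_PP ⟨n, by omega⟩ ⟨n + 1, hn⟩ rfl), by simp [Walk.length_concat, hW]⟩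

lemma exists_walk_wP (i : Fin p) :
    ∃ Wk : (attachTwoPaths G w p q).Walk (Sum.inl w) (Sum.inr (Sum.inl i)),
      Wk.length = (i : ℕ) + 1 := by
  obtain ⟨n, hn⟩ := i; exact exists_walk_wP' n hn

lemma exists_walk_wQ' : ∀ (n : ℕ) (hn : n < q),
    ∃ Wk : (attachTwoPaths G w p q).Walk (Sum.inl w) (Sum.inr (Sum.inr ⟨n, hn⟩)),
      Wk.length = n + 1 := by
  intro n
  induction n with
  | zero => exact fun hn => ⟨(adj_wQ0 ⟨0, hn⟩ rfl).toWalk, by simp⟩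
  | succ n ih =>
    intro hn
    obtain ⟨Wk, hW⟩ := ih (by omega)
    exact ⟨Wk.concat (adj_QQ ⟨n, by omega⟩ ⟨n + 1, hn⟩ rfl), by simp [Walk.length_concat, hW]⟩

lemma exists_walk_wQ (j : Fin q) :
    ∃ Wk : (attachTwoPaths G w p q).Walk (Sum.inl w) (Sum.inr (Sum.inr j)),
      Wk.length = (j : ℕ) + 1 := by
  obtain ⟨n, hn⟩ := j; exact exists_walk_wQ' n hn

lemma exists_walk_PP (m n : ℕ) (hmn : m ≤ n) (hn : n < p) :
    ∃ Wk : (attachTwoPaths G w p q).Walk (Sum.inr (Sum.inl ⟨m, hmn.trans_lt hn⟩))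
      (Sum.inr (Sum.inl ⟨n, hn⟩)), Wk.length = n - m := by
  induction n, hmn using Nat.le_induction with
  | base => exact ⟨Walk.nil, by simp⟩
  | succ n hmn ih =>
    obtain ⟨Wk, hW⟩ := ih (by omega)
    exact ⟨Wk.concat (adj_PP ⟨n, by omega⟩ ⟨n + 1, hn⟩ rfl), by simp [Walk.length_concat, hW]; omega⟩

lemma exists_walk_QQ (m n : ℕ) (hmn : m ≤ n) (hn : n < q) :
    ∃ Wk : (attachTwoPaths G w p q).Walk (Sum.inr (Sum.inr ⟨m, hmn.trans_lt hn⟩))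
      (Sum.inr (Sum.inr ⟨n, hn⟩)), Wk.length = n - m := by
  induction n, hmn using Nat.le_induction with
  | base => exact ⟨Walk.nil, by simp⟩
  | succ n hmn ih =>
    obtain ⟨Wk, hW⟩ := ih (by omega)
    exact ⟨Wk.concat (adj_QQ ⟨n, by omega⟩ ⟨n + 1, hn⟩ rfl), by simp [Walk.length_concat, hW]; omega⟩


lemma distb_lip (hG : G.Connected) (b : V) :
    ∀ x y : V, G.Adj x y → |(G.dist x b : ℤ) - (G.dist y b : ℤ)| ≤ 1 := by
  intro x y h
  have hxy : G.dist x y ≤ 1 := by simpa using SimpleGraph.dist_le h.toWalk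
  have hyx : G.dist y x ≤ 1 := by simpa using SimpleGraph.dist_le h.symm.toWalk
  have h1 := hG.dist_triangle (u := x) (v := y) (w := b)
  have h2 := hG.dist_triangle (u := y) (v := x) (w := b)
  rw [abs_sub_le_iff]
  constructor <;> omega

lemma dist_inl_inl (hG : G.Connected) (a b : V) :
    (attachTwoPaths G w p q).dist (Sum.inl a) (Sum.inl b) = G.dist a b := by
  obtain ⟨Wk, hW⟩ := hG.exists_walk_length_eq_dist a b
  obtain ⟨W, hWl⟩ := exists_walk_inl (w := w) (p := p) (q := q) Wk
  have hle := SimpleGraph.dist_le W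
  rw [hWl, hW] at hle
  have hge := dist_ge_lip _
    (pot_lip (fun x => (G.dist x b : ℤ)) 1 1 (distb_lip hG b) (by norm_num) (by norm_num)) ⟨W⟩
  simp only [pot, SimpleGraph.dist_self] at hge
  obtain ⟨h1, h2⟩ := abs_le.mp hge
  omega

lemma dist_inl_P (hG : G.Connected) (a : V) (i : Fin p) :
    (attachTwoPaths G w p q).dist (Sum.inl a) (Sum.inr (Sum.inl i)) = G.dist a w + i + 1 := by
  obtain ⟨W1', h1'⟩ := hG.exists_walk_length_eq_dist a w
  obtain ⟨W1, h1⟩ := exists_walk_inl (w := w) (p := p) (q := q) W1'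
  obtain ⟨W2, h2⟩ := exists_walk_wP (G := G) (q := q) i
  have hle := SimpleGraph.dist_le (W1.append W2)
  rw [Walk.length_append, h1, h1', h2] at hle
  have hge := dist_ge_lip _
    (pot_lip (fun x => (G.dist x a : ℤ)) 1 1 (distb_lip hG a) (by norm_num) (by norm_num))
    ⟨W1.append W2⟩
  simp only [pot, SimpleGraph.dist_self] at hge
  obtain ⟨hg1, hg2⟩ := abs_le.mp hge
  have hc := SimpleGraph.dist_comm (G := G) (u := a) (v := w)
  omega

lemma dist_inl_Q (hG : G.Connected) (a : V) (j : Fin q) :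
    (attachTwoPaths G w p q).dist (Sum.inl a) (Sum.inr (Sum.inr j)) = G.dist a w + j + 1 := by
  obtain ⟨W1', h1'⟩ := hG.exists_walk_length_eq_dist a w
  obtain ⟨W1, h1⟩ := exists_walk_inl (w := w) (p := p) (q := q) W1'
  obtain ⟨W2, h2⟩ := exists_walk_wQ (G := G) (p := p) j
  have hle := SimpleGraph.dist_le (W1.append W2)
  rw [Walk.length_append, h1, h1', h2] at hle
  have hge := dist_ge_lip _
    (pot_lip (fun x => (G.dist x a : ℤ)) 1 1 (distb_lip hG a) (by norm_num) (by norm_num))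
    ⟨W1.append W2⟩
  simp only [pot, SimpleGraph.dist_self] at hge
  obtain ⟨hg1, hg2⟩ := abs_le.mp hge
  have hc := SimpleGraph.dist_comm (G := G) (u := a) (v := w)
  omega

lemma dist_P_P (i j : Fin p) (hij : (i : ℕ) ≤ (j : ℕ)) :
    (attachTwoPaths G w p q).dist (Sum.inr (Sum.inl i)) (Sum.inr (Sum.inl j))
      = (j : ℕ) - (i : ℕ) := by
  obtain ⟨Wk, hW⟩ := exists_walk_PP (G := G) (w := w) (q := q) i j hij j.2
  have hle := SimpleGraph.dist_le Wk
  rw [hW] at hle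
  simp only [Fin.eta] at hle
  have hge := dist_ge_lip _
    (pot_lip (fun _ => (0 : ℤ)) 1 0 (by simp) (by norm_num) (by norm_num))
    ⟨(Fin.eta i i.2 ▸ Fin.eta j j.2 ▸ Wk : (attachTwoPaths G w p q).Walk _ _)⟩
  simp only [pot] at hge
  obtain ⟨hg1, hg2⟩ := abs_le.mp hge
  omega

lemma dist_Q_Q (i j : Fin q) (hij : (i : ℕ) ≤ (j : ℕ)) :
    (attachTwoPaths G w p q).dist (Sum.inr (Sum.inr i)) (Sum.inr (Sum.inr j))
      = (j : ℕ) - (i : ℕ) := by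
  obtain ⟨Wk, hW⟩ := exists_walk_QQ (G := G) (w := w) (p := p) i j hij j.2
  have hle := SimpleGraph.dist_le Wk
  rw [hW] at hle
  simp only [Fin.eta] at hle
  have hge := dist_ge_lip _
    (pot_lip (fun _ => (0 : ℤ)) 0 1 (by simp) (by norm_num) (by norm_num))
    ⟨(Fin.eta i i.2 ▸ Fin.eta j j.2 ▸ Wk : (attachTwoPaths G w p q).Walk _ _)⟩
  simp only [pot] at hge
  obtain ⟨hg1, hg2⟩ := abs_le.mp hge
  omega

lemma dist_P_Q (i : Fin p) (j : Fin q) :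
    (attachTwoPaths G w p q).dist (Sum.inr (Sum.inl i)) (Sum.inr (Sum.inr j))
      = (i : ℕ) + (j : ℕ) + 2 := by
  obtain ⟨W1, h1⟩ := exists_walk_wP (G := G) (w := w) (q := q) i
  obtain ⟨W2, h2⟩ := exists_walk_wQ (G := G) (w := w) (p := p) j
  have hle := SimpleGraph.dist_le (W1.reverse.append W2)
  rw [Walk.length_append, Walk.length_reverse, h1, h2] at hle
  have hge := dist_ge_lip _
    (pot_lip (fun _ => (0 : ℤ)) 1 (-1) (by simp) (by norm_num) (by norm_num))
    ⟨W1.reverse.append W2⟩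
  simp only [pot] at hge
  obtain ⟨hg1, hg2⟩ := abs_le.mp hge
  omega

lemma dist_le_ecc {W : Type*} [Fintype W] (H : SimpleGraph W) (v u : W) :
    H.dist v u ≤ eccentricity H v :=
  Finset.le_sup (Finset.mem_univ u)

lemma ecc_inl [Fintype V] (hG : G.Connected) (hp : 1 ≤ p) (hqp : q ≤ p) (a : V) :
    eccentricity (attachTwoPaths G w p q) (Sum.inl a)
      = max (eccentricity G a) (G.dist a w + p) := by
  apply le_antisymm
  · apply Finset.sup_le
    rintro (b | i | j) -
    · rw [dist_inl_inl hG]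
      exact le_max_of_le_left (dist_le_ecc G a b)
    · rw [dist_inl_P hG]
      have := i.2
      have h := le_max_right (eccentricity G a) (G.dist a w + p)
      omega
    · rw [dist_inl_Q hG]
      have := j.2
      have h := le_max_right (eccentricity G a) (G.dist a w + p)
      omega
  · apply max_le
    · apply Finset.sup_le
      intro b _
      rw [← dist_inl_inl (w := w) (p := p) (q := q) hG a b]
      exact dist_le_ecc _ _ _
    · have h := dist_le_ecc (attachTwoPaths G w p q) (Sum.inl a)
        (Sum.inr (Sum.inl ⟨p - 1, by omega⟩))
      rw [dist_inl_P hG] at h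
      simp only [Fin.val_mk] at h
      omega

lemma ecc_P [Fintype V] (hG : G.Connected) (i : Fin p) :
    eccentricity (attachTwoPaths G w p q) (Sum.inr (Sum.inl i))
      = max ((i : ℕ) + 1 + max (eccentricity G w) q) (p - 1 - (i : ℕ)) := by
  apply le_antisymm
  · apply Finset.sup_le
    rintro (b | i' | j) -
    · rw [SimpleGraph.dist_comm, dist_inl_P hG]
      have h1 : G.dist b w ≤ eccentricity G w := by
        rw [SimpleGraph.dist_comm]; exact dist_le_ecc G w b
      have h2 := le_max_left (eccentricity G w) q
      have h3 := le_max_left ((i : ℕ) + 1 + max (eccentricity G w) q) (p - 1 - (i : ℕ))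
      omega
    · rcases le_total (i : ℕ) (i' : ℕ) with h | h
      · rw [dist_P_P i i' h]
        have := i'.2
        have h3 := le_max_right ((i : ℕ) + 1 + max (eccentricity G w) q) (p - 1 - (i : ℕ))
        omega
      · rw [SimpleGraph.dist_comm, dist_P_P i' i h]
        have h3 := le_max_left ((i : ℕ) + 1 + max (eccentricity G w) q) (p - 1 - (i : ℕ))
        omega
    · rw [dist_P_Q]
      have := j.2
      have h2 := le_max_right (eccentricity G w) q
      have h3 := le_max_left ((i : ℕ) + 1 + max (eccentricity G w) q) (p - 1 - (i : ℕ))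
      omega
  · apply max_le
    · rcases le_or_gt q (eccentricity G w) with hqM | hqM
      · obtain ⟨b, -, hb⟩ := Finset.exists_mem_eq_sup (Finset.univ : Finset V)
          ⟨w, Finset.mem_univ w⟩ (fun u => G.dist w u)
        have h := dist_le_ecc (attachTwoPaths G w p q) (Sum.inr (Sum.inl i)) (Sum.inl b)
        rw [SimpleGraph.dist_comm, dist_inl_P hG] at h
        have hc : G.dist b w = eccentricity G w := by
          rw [SimpleGraph.dist_comm, ← hb]; rfl
        have hmax : max (eccentricity G w) q = eccentricity G w := max_eq_left hqM
        omega
      · have hq1 : 1 ≤ q := by omega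
        have h := dist_le_ecc (attachTwoPaths G w p q) (Sum.inr (Sum.inl i))
          (Sum.inr (Sum.inr ⟨q - 1, by omega⟩))
        rw [dist_P_Q] at h
        have hmax : max (eccentricity G w) q = q := max_eq_right hqM.le
        simp only [hmax]
        simp at h
        omega
    · have h := dist_le_ecc (attachTwoPaths G w p q) (Sum.inr (Sum.inl i))
        (Sum.inr (Sum.inl ⟨p - 1, by have := i.2; omega⟩))
      rw [dist_P_P i ⟨p - 1, by have := i.2; omega⟩ (by have := i.2; simp; omega)] at h
      simpa using h

lemma ecc_Q [Fintype V] (hG : G.Connected) (j : Fin q) :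
    eccentricity (attachTwoPaths G w p q) (Sum.inr (Sum.inr j))
      = max ((j : ℕ) + 1 + max (eccentricity G w) p) (q - 1 - (j : ℕ)) := by
  apply le_antisymm
  · apply Finset.sup_le
    rintro (b | i' | j') -
    · rw [SimpleGraph.dist_comm, dist_inl_Q hG]
      have h1 : G.dist b w ≤ eccentricity G w := by
        rw [SimpleGraph.dist_comm]; exact dist_le_ecc G w b
      have h2 := le_max_left (eccentricity G w) p
      have h3 := le_max_left ((j : ℕ) + 1 + max (eccentricity G w) p) (q - 1 - (j : ℕ))
      omega
    · rw [SimpleGraph.dist_comm, dist_P_Q]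
      have := i'.2
      have h2 := le_max_right (eccentricity G w) p
      have h3 := le_max_left ((j : ℕ) + 1 + max (eccentricity G w) p) (q - 1 - (j : ℕ))
      omega
    · rcases le_total (j : ℕ) (j' : ℕ) with h | h
      · rw [dist_Q_Q j j' h]
        have := j'.2
        have h3 := le_max_right ((j : ℕ) + 1 + max (eccentricity G w) p) (q - 1 - (j : ℕ))
        omega
      · rw [SimpleGraph.dist_comm, dist_Q_Q j' j h]
        have h3 := le_max_left ((j : ℕ) + 1 + max (eccentricity G w) p) (q - 1 - (j : ℕ))
        omega
  · apply max_le
    · rcases le_or_gt p (eccentricity G w) with hpM | hpM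
      · obtain ⟨b, -, hb⟩ := Finset.exists_mem_eq_sup (Finset.univ : Finset V)
          ⟨w, Finset.mem_univ w⟩ (fun u => G.dist w u)
        have h := dist_le_ecc (attachTwoPaths G w p q) (Sum.inr (Sum.inr j)) (Sum.inl b)
        rw [SimpleGraph.dist_comm, dist_inl_Q hG] at h
        have hc : G.dist b w = eccentricity G w := by
          rw [SimpleGraph.dist_comm, ← hb]; rfl
        have hmax : max (eccentricity G w) p = eccentricity G w := max_eq_left hpM
        omega
      · have hp1 : 1 ≤ p := by omega
        have h := dist_le_ecc (attachTwoPaths G w p q) (Sum.inr (Sum.inr j))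
          (Sum.inr (Sum.inl ⟨p - 1, by omega⟩))
        rw [SimpleGraph.dist_comm, dist_P_Q] at h
        have hmax : max (eccentricity G w) p = p := max_eq_right hpM.le
        simp only [hmax]
        simp at h
        omega
    · have h := dist_le_ecc (attachTwoPaths G w p q) (Sum.inr (Sum.inr j))
        (Sum.inr (Sum.inr ⟨q - 1, by have := j.2; omega⟩))
      rw [dist_Q_Q j ⟨q - 1, by have := j.2; omega⟩ (by have := j.2; simp; omega)] at h
      simpa using h

lemma sum_ecc [Fintype V] (hG : G.Connected) (hp : 1 ≤ p) (hqp : q ≤ p) :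
    ∑ x : V ⊕ (Fin p ⊕ Fin q), eccentricity (attachTwoPaths G w p q) x
      = (∑ a : V, max (eccentricity G a) (G.dist a w + p))
        + ((∑ i : Fin p, max ((i : ℕ) + 1 + max (eccentricity G w) q) (p - 1 - (i : ℕ)))
        + (∑ j : Fin q, max ((j : ℕ) + 1 + max (eccentricity G w) p) (q - 1 - (j : ℕ)))) := by
  rw [Fintype.sum_sum_type, Fintype.sum_sum_type]
  congr 1
  · exact Finset.sum_congr rfl fun a _ => ecc_inl hG hp hqp a
  · congr 1
    · exact Finset.sum_congr rfl fun i _ => ecc_P hG i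
    · exact Finset.sum_congr rfl fun j _ => ecc_Q hG j

end AttachAux

/-- If `G` is a nontrivial connected graph, `w ∈ V(G)` and `p ≥ q ≥ 1`, then
`ecc (G(p, q)) < ecc (G(p + 1, q - 1))`. -/
theorem avgEcc_attachTwoPaths_lt {V : Type*} [Fintype V] (G : SimpleGraph V) (w : V)
    (hG : G.Connected) (hnontriv : 2 ≤ Fintype.card V)
    (p q : ℕ) (hq : 1 ≤ q) (hpq : q ≤ p) :
    avgEcc (attachTwoPaths G w p q) < avgEcc (attachTwoPaths G w (p + 1) (q - 1)) := by

  obtain ⟨q', rfl⟩ : ∃ q', q = q' + 1 := ⟨q - 1, by omega⟩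
  have hq'p : q' + 1 ≤ p := hpq
  show avgEcc (attachTwoPaths G w p (q' + 1)) < avgEcc (attachTwoPaths G w (p + 1) q')
  set M := eccentricity G w with hMdef
  have hM1 : 1 ≤ M := by
    obtain ⟨b, hb⟩ := Fintype.exists_ne_of_one_lt_card (by omega) w
    have hpos : 0 < G.dist w b := hG.pos_dist_of_ne (Ne.symm hb)
    have hle := AttachAux.dist_le_ecc G w b
    omega
  have hecc : ∀ a : V, eccentricity G a ≤ G.dist a w + M := by
    intro a
    apply Finset.sup_le
    intro b _
    calc G.dist a b ≤ G.dist a w + G.dist w b := hG.dist_triangle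
    _ ≤ G.dist a w + M := by have := AttachAux.dist_le_ecc G w b; omega
  have core : (∑ x : V ⊕ (Fin p ⊕ Fin (q' + 1)),
        eccentricity (attachTwoPaths G w p (q' + 1)) x)
      < ∑ x : V ⊕ (Fin (p + 1) ⊕ Fin q'),
        eccentricity (attachTwoPaths G w (p + 1) q') x := by
    rw [AttachAux.sum_ecc hG (by omega) hpq, AttachAux.sum_ecc hG (by omega) (by omega)]
    rw [← hMdef]
    have hAcard : (∑ a : V, (max (eccentricity G a) (G.dist a w + p) + 1))
        = (∑ a : V, max (eccentricity G a) (G.dist a w + p)) + Fintype.card V := by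
      rw [Finset.sum_add_distrib, Finset.sum_const, smul_eq_mul, mul_one, Finset.card_univ]
    rcases le_or_gt M p with hMp | hMp
    · -- case M ≤ p
      have hA : (∑ a : V, max (eccentricity G a) (G.dist a w + p)) + Fintype.card V
          ≤ ∑ a : V, max (eccentricity G a) (G.dist a w + (p + 1)) := by
        rw [← hAcard]
        exact Finset.sum_le_sum fun a _ => by have := hecc a; omega
      have hB : (∑ i : Fin p, max ((i : ℕ) + 1 + max M (q' + 1)) (p - 1 - (i : ℕ))) + p
          ≤ ∑ i : Fin (p + 1), max ((i : ℕ) + 1 + max M q') (p + 1 - 1 - (i : ℕ)) := by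
        rw [Fin.sum_univ_succ]
        simp only [Fin.val_zero, Fin.val_succ]
        have h1 : (∑ i : Fin p, max ((i : ℕ) + 1 + max M (q' + 1)) (p - 1 - (i : ℕ)))
            ≤ ∑ i : Fin p, max ((i : ℕ) + 1 + 1 + max M q') (p + 1 - 1 - ((i : ℕ) + 1)) :=
          Finset.sum_le_sum fun i _ => by have := i.2; omega
        omega
      have hC : (∑ j : Fin (q' + 1),
            max ((j : ℕ) + 1 + max M p) (q' + 1 - 1 - (j : ℕ))) + q'
          ≤ (∑ j : Fin q', max ((j : ℕ) + 1 + max M (p + 1)) (q' - 1 - (j : ℕ)))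
            + (q' + 1 + p) := by
        rw [Fin.sum_univ_castSucc]
        simp only [Fin.coe_castSucc, Fin.val_last]
        have h1 : (∑ j : Fin q',
              (max ((j : ℕ) + 1 + max M p) (q' + 1 - 1 - (j : ℕ)) + 1))
            ≤ ∑ j : Fin q', max ((j : ℕ) + 1 + max M (p + 1)) (q' - 1 - (j : ℕ)) :=
          Finset.sum_le_sum fun j _ => by have := j.2; omega
        have h2 : (∑ j : Fin q',
              (max ((j : ℕ) + 1 + max M p) (q' + 1 - 1 - (j : ℕ)) + 1))
            = (∑ j : Fin q', max ((j : ℕ) + 1 + max M p) (q' + 1 - 1 - (j : ℕ))) + q' := by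
          rw [Finset.sum_add_distrib, Finset.sum_const, smul_eq_mul, mul_one,
            Finset.card_univ, Fintype.card_fin]
        omega
      omega
    · -- case p < M
      have hA : (∑ a : V, max (eccentricity G a) (G.dist a w + p))
          ≤ ∑ a : V, max (eccentricity G a) (G.dist a w + (p + 1)) :=
        Finset.sum_le_sum fun a _ => by omega
      have hB : (∑ i : Fin p, max ((i : ℕ) + 1 + max M (q' + 1)) (p - 1 - (i : ℕ)))
            + (p + M + 1)
          ≤ ∑ i : Fin (p + 1), max ((i : ℕ) + 1 + max M q') (p + 1 - 1 - (i : ℕ)) := by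
        rw [Fin.sum_univ_succ]
        simp only [Fin.val_zero, Fin.val_succ]
        have h1 : (∑ i : Fin p,
              (max ((i : ℕ) + 1 + max M (q' + 1)) (p - 1 - (i : ℕ)) + 1))
            ≤ ∑ i : Fin p, max ((i : ℕ) + 1 + 1 + max M q') (p + 1 - 1 - ((i : ℕ) + 1)) :=
          Finset.sum_le_sum fun i _ => by have := i.2; omega
        have h2 : (∑ i : Fin p,
              (max ((i : ℕ) + 1 + max M (q' + 1)) (p - 1 - (i : ℕ)) + 1))
            = (∑ i : Fin p, max ((i : ℕ) + 1 + max M (q' + 1)) (p - 1 - (i : ℕ))) + p := by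
          rw [Finset.sum_add_distrib, Finset.sum_const, smul_eq_mul, mul_one,
            Finset.card_univ, Fintype.card_fin]
        omega
      have hC : (∑ j : Fin (q' + 1),
            max ((j : ℕ) + 1 + max M p) (q' + 1 - 1 - (j : ℕ)))
          ≤ (∑ j : Fin q', max ((j : ℕ) + 1 + max M (p + 1)) (q' - 1 - (j : ℕ)))
            + (q' + 1 + M) := by
        rw [Fin.sum_univ_castSucc]
        simp only [Fin.coe_castSucc, Fin.val_last]
        have h1 : (∑ j : Fin q', max ((j : ℕ) + 1 + max M p) (q' + 1 - 1 - (j : ℕ)))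
            ≤ ∑ j : Fin q', max ((j : ℕ) + 1 + max M (p + 1)) (q' - 1 - (j : ℕ)) :=
          Finset.sum_le_sum fun j _ => by have := j.2; omega
        omega
      omega
  -- real part
  unfold avgEcc
  have hc2 : Fintype.card (V ⊕ (Fin (p + 1) ⊕ Fin q'))
      = Fintype.card (V ⊕ (Fin p ⊕ Fin (q' + 1))) := by
    simp [Fintype.card_sum]; omega
  rw [hc2]
  have hpos : (0 : ℝ) < (Fintype.card (V ⊕ (Fin p ⊕ Fin (q' + 1))) : ℝ) := by
    have : 0 < Fintype.card (V ⊕ (Fin p ⊕ Fin (q' + 1))) :=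
      Fintype.card_pos_iff.mpr ⟨Sum.inl w⟩
    exact_mod_cast this
  rw [div_lt_div_iff_of_pos_right hpos]
  exact_mod_cast core
end

section
/- For integers n and Δ with 2 ≤ Δ ≤ n−1, the average eccentricity of the broom satisfies ecc(B(n,Δ)) = (1/n)·( ⌊(n−Δ+2)(3(n−Δ+2)−2)/4⌋ + (n−Δ+1)(Δ−2) ). -/
open SimpleGraph

/-- The broom `B(n, Δ)`: a path `0 — 1 — ⋯ — (n-Δ)` together with `Δ-1` pendant
vertices `n-Δ+1, …, n-1` attached to the vertex `n-Δ`. -/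
def broom (n Δ : ℕ) : SimpleGraph (Fin n) :=
  SimpleGraph.fromRel (fun i j =>
    ((i : ℕ) + 1 = (j : ℕ) ∧ (j : ℕ) ≤ n - Δ) ∨ ((i : ℕ) = n - Δ ∧ n - Δ < (j : ℕ)))

/-!
Write `m = n - Δ`. Along the handle `0 — ⋯ — m` distances are `|i - j|`, and every pendant sits one
step beyond the hub `m`. Hence a handle vertex `i` has eccentricity `max i (m + 1 - i)` (attained at
`0` or at a pendant) and a pendant has eccentricity `m + 1`. Upper bounds come from walks in the broom,
lower bounds from the potential `x ↦ min x (m + 1)`, which changes by at most one along each edge.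
Summing, `∑_{i ≤ m+1} max i (m + 1 - i) = ⌊(m + 2)(3m + 4)/4⌋` by a two-step induction.
-/

open Finset

namespace SimpleGraph

variable {V : Type*} {G : SimpleGraph V}

theorem Walk.le_add_length {f : V → ℕ} (hf : ∀ x y, G.Adj x y → f x ≤ f y + 1) {u v : V}
    (p : G.Walk u v) : f u ≤ f v + p.length := by
  induction p with
  | nil => simp
  | cons h _ ih =>
    rw [Walk.length_cons]
    have := hf _ _ h
    omega

theorem Reachable.le_add_dist {f : V → ℕ} (hf : ∀ x y, G.Adj x y → f x ≤ f y + 1) {u v : V}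
    (h : G.Reachable u v) : f u ≤ f v + G.dist u v := by
  obtain ⟨p, hp⟩ := h.exists_walk_length_eq_dist
  exact hp ▸ p.le_add_length hf

end SimpleGraph

section Eccentricity

variable {V : Type*} [Fintype V] {G : SimpleGraph V}

theorem dist_le_eccentricity (v u : V) : G.dist v u ≤ eccentricity G v :=
  le_sup (mem_univ u)

theorem eccentricity_le {v : V} {k : ℕ} (h : ∀ u, G.dist v u ≤ k) : eccentricity G v ≤ k :=
  Finset.sup_le fun u _ => h u

end Eccentricity

theorem sum_range_max_sub_add_two (N : ℕ) :
    ∑ i ∈ range (N + 3), max i (N + 2 - i) = ∑ i ∈ range (N + 1), max i (N - i) + (3 * N + 5) := by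
  have shift : ∀ i, max (i + 1) (N + 2 - (i + 1)) = max i (N - i) + 1 := fun i => by omega
  rw [sum_range_succ, sum_range_succ', sum_congr rfl fun i _ => shift i, sum_add_distrib,
    sum_const, card_range]
  simp only [smul_eq_mul]
  omega

theorem four_mul_sum_range_max_sub (N : ℕ) :
    4 * ∑ i ∈ range (N + 1), max i (N - i) + (N + 1) % 2 = (N + 1) * (3 * N + 1) := by
  match N with
  | 0 => simp
  | 1 => simp [sum_range_succ]
  | N + 2 =>
    have ih := four_mul_sum_range_max_sub N
    have : (N + 2 + 1) * (3 * (N + 2) + 1) = (N + 1) * (3 * N + 1) + 4 * (3 * N + 5) := by ring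
    rw [sum_range_max_sub_add_two]
    omega

theorem sum_range_max_sub (N : ℕ) :
    ∑ i ∈ range (N + 1), max i (N - i) = (N + 1) * (3 * N + 1) / 4 := by
  have := four_mul_sum_range_max_sub N
  omega

section Broom

variable {n Δ : ℕ}

theorem broom_adj_iff {i j : Fin n} : (broom n Δ).Adj i j ↔
    ((i : ℕ) + 1 = j ∧ (j : ℕ) ≤ n - Δ) ∨ ((i : ℕ) = n - Δ ∧ n - Δ < j) ∨
      ((j : ℕ) + 1 = i ∧ (i : ℕ) ≤ n - Δ) ∨ ((j : ℕ) = n - Δ ∧ n - Δ < i) := by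
  simp only [broom, fromRel_adj, ne_eq, Fin.ext_iff]
  omega

theorem broom_adj_succ {i : ℕ} (hi : i + 1 ≤ n - Δ) (hn : n - Δ < n) :
    (broom n Δ).Adj ⟨i, by omega⟩ ⟨i + 1, by omega⟩ :=
  broom_adj_iff.2 (Or.inl ⟨rfl, hi⟩)

theorem broom_adj_hub {p : Fin n} (hp : n - Δ < p) : (broom n Δ).Adj ⟨n - Δ, by omega⟩ p :=
  broom_adj_iff.2 (Or.inr (Or.inl ⟨rfl, hp⟩))

theorem broom_connected (hn : n - Δ < n) : (broom n Δ).Connected := by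
  have handle : ∀ i (hi : i ≤ n - Δ), (broom n Δ).Reachable ⟨0, by omega⟩ ⟨i, by omega⟩ := by
    intro i hi
    induction i with
    | zero => rfl
    | succ i ih => exact (ih (by omega)).trans (broom_adj_succ hi hn).reachable
  refine (connected_iff_exists_forall_reachable _).2 ⟨⟨0, by omega⟩, fun v => ?_⟩
  by_cases hv : (v : ℕ) ≤ n - Δ
  · exact handle v hv
  · exact (handle (n - Δ) le_rfl).trans (broom_adj_hub (by omega)).reachable

theorem broom_dist_le_sub {i j : Fin n} (hij : (i : ℕ) ≤ j) (hj : (j : ℕ) ≤ n - Δ) :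
    (broom n Δ).dist i j ≤ j - i := by
  obtain ⟨k, hk⟩ := Nat.exists_eq_add_of_le hij
  induction k generalizing j with
  | zero => simp [Fin.ext hk]
  | succ k ih =>
    obtain ⟨j', hj'⟩ : ∃ j' : Fin n, (j' : ℕ) = i + k := ⟨⟨i + k, by omega⟩, rfl⟩
    have hadj : (broom n Δ).Adj j' j := broom_adj_iff.2 (Or.inl ⟨by omega, hj⟩)
    have := hadj.reachable.dist_triangle_right i
    have := ih (j := j') (by omega) (by omega) hj'
    rw [dist_eq_one_iff_adj.2 hadj] at *
    omega

theorem broom_dist_pendant_le {p : Fin n} (hp : n - Δ < p) (u : Fin n) :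
    (broom n Δ).dist p u ≤ (broom n Δ).dist ⟨n - Δ, by omega⟩ u + 1 := by
  have hadj := broom_adj_hub hp
  have := hadj.symm.reachable.dist_triangle_left u
  rw [dist_eq_one_iff_adj.2 hadj.symm] at this
  omega

theorem broom_min_le_add_dist (hn : n - Δ < n) (u v : Fin n) :
    min (u : ℕ) (n - Δ + 1) ≤ min (v : ℕ) (n - Δ + 1) + (broom n Δ).dist u v := by
  refine ((broom_connected hn).preconnected u v).le_add_dist
    (f := fun x : Fin n => min (x : ℕ) (n - Δ + 1)) fun x y h => ?_
  rw [broom_adj_iff] at h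
  omega

theorem eccentricity_broom_of_le (hn : n - Δ + 2 ≤ n) {v : Fin n} (hv : (v : ℕ) ≤ n - Δ) :
    eccentricity (broom n Δ) v = max (v : ℕ) (n - Δ + 1 - v) := by
  have hhub : n - Δ < n := by omega
  refine le_antisymm (eccentricity_le fun u => ?_) (max_le ?_ ?_)
  · rcases le_total (u : ℕ) v with huv | hvu
    · have := broom_dist_le_sub huv hv
      rw [dist_comm] at this
      omega
    · by_cases hu : (u : ℕ) ≤ n - Δ
      · have := broom_dist_le_sub hvu hu
        omega
      · have h₁ := broom_dist_pendant_le (not_le.1 hu) v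
        have h₂ := broom_dist_le_sub (j := ⟨n - Δ, hhub⟩) hv le_rfl
        rw [dist_comm] at h₁ h₂
        simp only at h₂
        omega
  · have hpot := broom_min_le_add_dist hhub v ⟨0, by omega⟩
    have hecc := dist_le_eccentricity (G := broom n Δ) v ⟨0, by omega⟩
    simp only at hpot hecc
    omega
  · have hpot := broom_min_le_add_dist hhub ⟨n - Δ + 1, by omega⟩ v
    have hecc := dist_le_eccentricity (G := broom n Δ) v ⟨n - Δ + 1, by omega⟩
    rw [dist_comm] at hecc
    simp only at hpot hecc
    omega

theorem eccentricity_broom_of_lt (hm : 1 ≤ n - Δ) {p : Fin n} (hp : n - Δ < p) :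
    eccentricity (broom n Δ) p = n - Δ + 1 := by
  have hhub : n - Δ < n := by omega
  refine le_antisymm (eccentricity_le fun u => ?_) ?_
  · have h₁ := broom_dist_pendant_le hp u
    by_cases hu : (u : ℕ) ≤ n - Δ
    · have h₂ := broom_dist_le_sub (j := ⟨n - Δ, hhub⟩) hu le_rfl
      rw [dist_comm] at h₂
      simp only at h₂
      omega
    · have h₂ := broom_dist_pendant_le (not_le.1 hu) ⟨n - Δ, hhub⟩
      rw [dist_self, dist_comm] at h₂
      omega
  · have hpot := broom_min_le_add_dist hhub p ⟨0, by omega⟩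
    have hecc := dist_le_eccentricity (G := broom n Δ) p ⟨0, by omega⟩
    simp only at hpot hecc
    omega

theorem sum_eccentricity_broom (hΔ : 2 ≤ Δ) (hΔn : Δ ≤ n - 1) :
    ∑ v, eccentricity (broom n Δ) v =
      (n - Δ + 2) * (3 * (n - Δ + 2) - 2) / 4 + (n - Δ + 1) * (Δ - 2) := by
  set m := n - Δ
  let e : ℕ → ℕ := fun i => if i ≤ m then max i (m + 1 - i) else m + 1
  have hecc : ∀ v : Fin n, eccentricity (broom n Δ) v = e v := fun v => by
    by_cases hv : (v : ℕ) ≤ m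
    · exact (eccentricity_broom_of_le (by omega) hv).trans (if_pos hv).symm
    · exact (eccentricity_broom_of_lt (by omega) (not_le.1 hv)).trans (if_neg hv).symm
  have hn : n = (m + 1 + 1) + (Δ - 2) := by omega
  have handle : ∀ i ∈ range (m + 1 + 1), e i = max i (m + 1 - i) := fun i hi => by
    simp only [mem_range] at hi
    by_cases hi' : i ≤ m
    · simp only [e, if_pos hi']
    · simp only [e, if_neg hi']
      omega
  have hpendants : ∀ i ∈ range (Δ - 2), e (m + 1 + 1 + i) = m + 1 := fun i _ => by
    simp only [e, if_neg (show ¬ m + 1 + 1 + i ≤ m by omega)]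
  rw [sum_congr rfl fun v _ => hecc v, Fin.sum_univ_eq_sum_range e, hn, sum_range_add,
    sum_congr rfl handle, sum_congr rfl hpendants, sum_range_max_sub, sum_const, card_range,
    smul_eq_mul, show 3 * (m + 2) - 2 = 3 * (m + 1) + 1 by omega, mul_comm (Δ - 2)]

end Broom

/-- `ecc (B(n,Δ)) = (⌊(n-Δ+2)(3(n-Δ+2)-2)/4⌋ + (n-Δ+1)(Δ-2)) / n` for `2 ≤ Δ ≤ n-1`.
(Natural number division is floor division.) -/
theorem avgEcc_broom_formula {n Δ : ℕ} (hΔ : 2 ≤ Δ) (hΔn : Δ ≤ n - 1) :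
    avgEcc (broom n Δ) =
      ((((n - Δ + 2) * (3 * (n - Δ + 2) - 2) / 4 + (n - Δ + 1) * (Δ - 2) : ℕ) : ℝ)) / n := by
  rw [avgEcc, Fintype.card_fin, ← Nat.cast_sum, sum_eccentricity_broom hΔ hΔn]
end

section
/- Among all connected simple graphs on n vertices, the path P_n attains the maximum average eccentricity, i.e. for every connected graph G on n vertices, ecc(G) ≤ ecc(P_n). -/
open SimpleGraph

/-!
Eccentricities only grow when passing to a spanning tree. In a tree, the four-point condition
shows that the eccentricity of every vertex is attained at one of the two ends `X`, `Y` of a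
diametral path; and since all the distances `0, …, t` from `X` occur, at most `n - 1 - t`
vertices lie at distance `> t` from `X`, and likewise for `Y`. Hence at most
`min n (2 * (n - 1 - t))` vertices have eccentricity `> t`, while in `Pₙ` at least that many
do. Summing these counts over `t` compares the total eccentricities.
-/

open Finset

theorem Finset.sum_eq_sum_range_card_filter_lt {α : Type*} (s : Finset α) (f : α → ℕ)
    {K : ℕ} (hf : ∀ a ∈ s, f a ≤ K) : ∑ a ∈ s, f a = ∑ t ∈ range K, #{a ∈ s | t < f a} := by
  simp_rw [card_filter]
  rw [sum_comm]
  refine sum_congr rfl fun a ha => ?_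
  have hrange : {t ∈ range K | t < f a} = range (f a) := by
    ext t
    simp only [mem_filter, mem_range]
    have := hf a ha
    omega
  rw [← card_filter, hrange, card_range]

namespace SimpleGraph

variable {V : Type*} {G : SimpleGraph V}

lemma Walk.dist_add_dist_le_length {x y c : V} (p : G.Walk x y) (hc : c ∈ p.support) :
    G.dist x c + G.dist c y ≤ p.length := by
  classical
  rw [← p.take_spec hc, Walk.length_append]
  exact add_le_add (dist_le _) (dist_le _)

lemma Reachable.exists_dist_eq {z w : V} (h : G.Reachable z w) {k : ℕ} (hk : k ≤ G.dist z w) :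
    ∃ s, G.dist z s = k := by
  obtain ⟨p, hp⟩ := h.exists_walk_length_eq_dist
  refine ⟨p.getVert k, ?_⟩
  rw [← length_eq_dist_of_subwalk hp (p.isSubwalk_take k), Walk.take_length]
  omega

section Bridge

variable {a b x y : V}

lemma reachable_deleteEdges_or_of_reachable (h : G.Reachable x a) :
    (G.deleteEdges {s(a, b)}).Reachable x a ∨ (G.deleteEdges {s(a, b)}).Reachable x b := by
  by_contra! hx
  obtain ⟨p⟩ := h.symm
  obtain ⟨d, -, hd, hd'⟩ := p.exists_boundary_dart
    {y | (G.deleteEdges {s(a, b)}).Reachable y a ∨ (G.deleteEdges {s(a, b)}).Reachable y b}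
    (Or.inl .rfl) (by simpa using hx)
  by_cases he : s(d.fst, d.snd) = s(a, b)
  · obtain ⟨-, h⟩ | ⟨-, h⟩ := Sym2.eq_iff.mp he <;> simp [h] at hd'
  · have hadj : (G.deleteEdges {s(a, b)}).Adj d.snd d.fst :=
      deleteEdges_adj.mpr ⟨d.adj.symm, by simpa [Sym2.eq_swap] using he⟩
    exact hd' (hd.imp hadj.reachable.trans hadj.reachable.trans)

lemma IsBridge.mem_edges_of_reachable (hbr : G.IsBridge s(a, b))
    (hx : (G.deleteEdges {s(a, b)}).Reachable x a) (hy : (G.deleteEdges {s(a, b)}).Reachable y b)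
    (p : G.Walk x y) : s(a, b) ∈ p.edges := by
  by_contra hp
  exact hbr (hx.symm.trans ((reachable_deleteEdges_iff_exists_walk.mpr ⟨p, hp⟩).trans hy))

lemma IsBridge.dist_eq_dist_add_one (hG : G.Connected) (hbr : G.IsBridge s(a, b))
    (hx : (G.deleteEdges {s(a, b)}).Reachable x a) : G.dist x b = G.dist x a + 1 := by
  have hab : G.dist a b = 1 := dist_eq_one_iff_adj.mpr (hbr.reachable_iff_adj.mp (hG a b))
  obtain ⟨p, hp⟩ := hG.exists_walk_length_eq_dist x b
  have := p.dist_add_dist_le_length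
    (p.fst_mem_support_of_mem_edges (hbr.mem_edges_of_reachable hx .rfl p))
  have := hG.dist_triangle (u := x) (v := a) (w := b)
  omega

lemma IsBridge.dist_eq_dist_add_one_add_dist (hG : G.Connected) (hbr : G.IsBridge s(a, b))
    (hx : (G.deleteEdges {s(a, b)}).Reachable x a) (hy : (G.deleteEdges {s(a, b)}).Reachable y b) :
    G.dist x y = G.dist x a + 1 + G.dist b y := by
  have hay : G.dist a y = G.dist b y + 1 := by
    rw [Sym2.eq_swap] at hbr hy
    rw [dist_comm, hbr.dist_eq_dist_add_one hG hy, dist_comm]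
  obtain ⟨p, hp⟩ := hG.exists_walk_length_eq_dist x y
  have := p.dist_add_dist_le_length
    (p.fst_mem_support_of_mem_edges (hbr.mem_edges_of_reachable hx hy p))
  have := hG.dist_triangle (u := x) (v := a) (w := y)
  omega

end Bridge

lemma Connected.exists_adj_dist_eq {u v : V} (hG : G.Connected) {n : ℕ}
    (h : G.dist u v = n + 1) : ∃ w, G.Adj u w ∧ G.dist w v = n := by
  obtain ⟨p, hp⟩ := hG.exists_walk_length_eq_dist u v
  cases p with
  | nil => simp at h
  | @cons _ w _ hadj q =>
    refine ⟨w, hadj, ?_⟩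
    have := dist_le q
    have := hG.dist_triangle (u := u) (v := w) (w := v)
    simp only [Walk.length_cons, dist_eq_one_iff_adj.mpr hadj] at *
    omega

/-- The four-point condition. -/
theorem IsTree.dist_add_dist_le_max (hT : G.IsTree) (u v x y : V) :
    G.dist u v + G.dist x y ≤ max (G.dist u x + G.dist v y) (G.dist u y + G.dist v x) := by
  have hG := hT.connected
  induction h : G.dist u v generalizing u with
  | zero =>
    rw [hG.dist_eq_zero_iff.mp h, dist_comm (u := v) (v := x)]
    have := hG.dist_triangle (u := x) (v := v) (w := y)
    omega
  | succ n ih =>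
    obtain ⟨w, huw, hwv⟩ := hG.exists_adj_dist_eq h
    have hbr : G.IsBridge s(u, w) := isAcyclic_iff_forall_adj_isBridge.mp hT.isAcyclic huw
    have hbr' : G.IsBridge s(w, u) := Sym2.eq_swap ▸ hbr
    have hswap : G.deleteEdges {s(w, u)} = G.deleteEdges {s(u, w)} := by rw [Sym2.eq_swap]
    have hv : (G.deleteEdges {s(u, w)}).Reachable v w := by
      refine (reachable_deleteEdges_or_of_reachable (hG v u)).resolve_left fun hv => ?_
      have := hbr.dist_eq_dist_add_one hG hv
      rw [dist_comm, hwv, dist_comm, h] at this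
      omega
    have hvu : G.dist v u = G.dist v w + 1 := hbr'.dist_eq_dist_add_one hG (hswap ▸ hv)
    have hux : G.dist u x = G.dist x u := dist_comm
    have huy : G.dist u y = G.dist y u := dist_comm
    have hvx : G.dist v x = G.dist x v := dist_comm
    have hvy : G.dist v y = G.dist y v := dist_comm
    have hxy : G.dist x y ≤ G.dist x u + G.dist u y := hG.dist_triangle
    rcases reachable_deleteEdges_or_of_reachable (b := w) (hG x u) with hx | hx
    · have := hbr.dist_eq_dist_add_one_add_dist hG hx hv
      omega
    rcases reachable_deleteEdges_or_of_reachable (b := w) (hG y u) with hy | hy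
    · have := hbr.dist_eq_dist_add_one_add_dist hG hy hv
      omega
    have hxu := hbr'.dist_eq_dist_add_one hG (hswap ▸ hx)
    have hyu := hbr'.dist_eq_dist_add_one hG (hswap ▸ hy)
    have := ih w hwv
    rw [dist_comm (u := w) (v := x), dist_comm (u := w) (v := y)] at this
    omega

section Eccentricity

variable [Fintype V]

lemma dist_le_eccentricity (v u : V) : G.dist v u ≤ eccentricity G v :=
  le_sup (mem_univ u)

lemma Connected.eccentricity_lt_card (hG : G.Connected) (v : V) :
    eccentricity G v < Fintype.card V := by
  have := hG.nonempty
  refine (Finset.sup_lt_iff (by simpa using Fintype.card_pos)).mpr fun u _ => ?_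
  obtain ⟨p, hp, hlen⟩ := hG.exists_path_of_dist v u
  exact hlen ▸ hp.length_lt

lemma Connected.eccentricity_anti {H : SimpleGraph V} (hG : G.Connected) (hle : G ≤ H) (v : V) :
    eccentricity H v ≤ eccentricity G v :=
  sup_mono_fun fun u _ => (hG v u).dist_anti hle

lemma IsTree.eccentricity_le_max_dist (hT : G.IsTree) {X Y : V} (hXY : G.dist X Y = G.diam)
    (v : V) : eccentricity G v ≤ max (G.dist v X) (G.dist v Y) := by
  have := hT.connected.nonempty
  have hd : G.ediam ≠ ⊤ := connected_iff_ediam_ne_top.mp hT.connected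
  refine Finset.sup_le fun u _ => ?_
  have := hT.dist_add_dist_le_max v u X Y
  have := dist_le_diam hd (u := u) (v := X)
  have := dist_le_diam hd (u := u) (v := Y)
  omega

lemma Connected.card_lt_dist_le (hG : G.Connected) (z : V) (t : ℕ) :
    #{s | t < G.dist z s} ≤ Fintype.card V - (t + 1) := by
  classical
  obtain h | ⟨w, hw⟩ := Finset.eq_empty_or_nonempty {s | t < G.dist z s}
  · simp [h]
  have hnear : range (t + 1) ⊆ image (G.dist z) {s | ¬ t < G.dist z s} := by
    intro k hk
    rw [mem_filter] at hw
    rw [mem_range] at hk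
    obtain ⟨s, hs⟩ := (hG z w).exists_dist_eq (k := k) (by omega)
    simp only [mem_image, mem_filter, mem_univ, true_and]
    exact ⟨s, by omega, hs⟩
  have := (card_le_card hnear).trans card_image_le
  have := card_filter_add_card_filter_not (s := univ) (fun s => t < G.dist z s)
  simp only [card_range, card_univ] at *
  omega

lemma IsTree.card_lt_eccentricity_le (hT : G.IsTree) (t : ℕ) :
    #{v | t < eccentricity G v} ≤ 2 * (Fintype.card V - (t + 1)) := by
  classical
  have := hT.connected.nonempty
  obtain ⟨X, Y, hXY⟩ := G.exists_dist_eq_diam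
  calc #{v | t < eccentricity G v}
      ≤ #(({v | t < G.dist X v} : Finset V) ∪ ({v | t < G.dist Y v} : Finset V)) := by
        refine card_le_card fun v => ?_
        simp only [mem_filter, mem_univ, true_and, mem_union]
        have := hT.eccentricity_le_max_dist hXY v
        rw [dist_comm (u := X), dist_comm (u := Y)]
        omega
    _ ≤ #{v | t < G.dist X v} + #{v | t < G.dist Y v} := card_union_le _ _
    _ ≤ 2 * (Fintype.card V - (t + 1)) := by
        have := hT.connected.card_lt_dist_le X t
        have := hT.connected.card_lt_dist_le Y t
        omega

lemma Connected.card_lt_eccentricity_le (hG : G.Connected) (t : ℕ) :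
    #{v | t < eccentricity G v} ≤ 2 * (Fintype.card V - (t + 1)) := by
  obtain ⟨T, hTG, hT⟩ := hG.exists_isTree_le
  refine le_trans (card_le_card (monotone_filter_right _ fun v _ hv => ?_))
    (hT.card_lt_eccentricity_le t)
  exact hv.trans_le (hT.connected.eccentricity_anti hTG v)

end Eccentricity

lemma pathGraph_val_le_val_add_length {n : ℕ} {i j : Fin n} (p : (pathGraph n).Walk i j) :
    (i : ℕ) ≤ j + p.length := by
  induction p with
  | nil => simp
  | cons h _ ih =>
    rw [pathGraph_adj] at h
    rw [Walk.length_cons]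
    omega

lemma max_le_eccentricity_pathGraph {m : ℕ} (i : Fin (m + 1)) :
    max (i : ℕ) (m - i) ≤ eccentricity (pathGraph (m + 1)) i := by
  have hG := pathGraph_connected m
  obtain ⟨p, hp⟩ := hG.exists_walk_length_eq_dist i 0
  obtain ⟨q, hq⟩ := hG.exists_walk_length_eq_dist (Fin.last m) i
  have := pathGraph_val_le_val_add_length p
  have := pathGraph_val_le_val_add_length q
  have := dist_le_eccentricity (G := pathGraph (m + 1)) i 0
  have := dist_le_eccentricity (G := pathGraph (m + 1)) i (Fin.last m)
  rw [dist_comm] at hq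
  simp only [Fin.val_last, Fin.val_zero] at *
  omega

lemma min_le_card_lt_eccentricity_pathGraph (m t : ℕ) :
    min (m + 1) (2 * (m - t)) ≤ #{i : Fin (m + 1) | t < eccentricity (pathGraph (m + 1)) i} := by
  have hnear : #{i : Fin (m + 1) | ¬ t < max (i : ℕ) (m - i)} ≤ #(Icc (m - t) t) := by
    refine card_le_card_of_injOn Fin.val (fun i hi => ?_) Fin.val_injective.injOn
    simp only [coe_filter, mem_univ, true_and, Set.mem_ofPred_eq, coe_Icc, Set.mem_Icc] at hi ⊢
    omega
  have := card_filter_add_card_filter_not (s := univ)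
    fun i : Fin (m + 1) => t < max (i : ℕ) (m - i)
  have : #{i : Fin (m + 1) | t < max (i : ℕ) (m - i)} ≤
      #{i : Fin (m + 1) | t < eccentricity (pathGraph (m + 1)) i} :=
    card_le_card <| monotone_filter_right _ fun i _ hi =>
      hi.trans_le (max_le_eccentricity_pathGraph i)
  simp only [Nat.card_Icc, card_univ, Fintype.card_fin] at *
  omega

end SimpleGraph

/-- Among connected graphs on `n` vertices, the path `Pₙ` attains the maximum
average eccentricity. -/
theorem avgEcc_le_path {V : Type*} [Fintype V] (G : SimpleGraph V) (hG : G.Connected)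
    (n : ℕ) (hn : Fintype.card V = n) :
    avgEcc G ≤ avgEcc (SimpleGraph.pathGraph n) := by
  have := hG.nonempty
  obtain ⟨m, rfl⟩ : ∃ m, n = m + 1 := Nat.exists_eq_add_one.mpr (hn ▸ Fintype.card_pos)
  have hP := pathGraph_connected m
  have hsum : ∑ v, eccentricity G v ≤ ∑ i, eccentricity (pathGraph (m + 1)) i := by
    have hK (v : V) : eccentricity G v ≤ m :=
      Nat.le_of_lt_succ (hn ▸ hG.eccentricity_lt_card v :)
    have hKP (i : Fin (m + 1)) : eccentricity (pathGraph (m + 1)) i ≤ m :=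
      Nat.le_of_lt_succ (by simpa using hP.eccentricity_lt_card i)
    rw [sum_eq_sum_range_card_filter_lt _ _ fun v _ => hK v,
      sum_eq_sum_range_card_filter_lt _ _ fun i _ => hKP i]
    gcongr with t
    calc #{v | t < eccentricity G v} ≤ min (m + 1) (2 * (m - t)) := by
          have hfar := hG.card_lt_eccentricity_le t
          have hall := card_filter_le (univ : Finset V) fun v => t < eccentricity G v
          rw [hn] at hfar
          rw [card_univ, hn] at hall
          omega
      _ ≤ _ := min_le_card_lt_eccentricity_pathGraph m t
  rw [avgEcc, avgEcc, hn, Fintype.card_fin]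
  gcongr
  exact_mod_cast hsum
end

section
/- Let T be a tree on n vertices that is not isomorphic to a path P_n. Then there exists a pendant vertex v of T such that for every vertex u of T with u ≠ v, the eccentricity of u in T equals the eccentricity of u in T − v, i.e. ε_T(u) = ε_{T−v}(u). -/
/-!
Let `a`, `b` realise the diameter of `T` and let `p` be the path from `a` to `b`. If `p` passes
through every vertex, `T` is a path. Otherwise a vertex off `p` farthest from `a` is a leaf
`v ∉ {a, b}`. A leaf is never an inner vertex of a path, so deleting it changes no distance between
the other vertices; and in a tree every `u` satisfies `d(u, w) ≤ max (d(u, a)) (d(u, b))` for all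
`w`, so the farthest distance from `u` is already attained at `a` or `b`.
-/

open SimpleGraph

namespace SimpleGraph

variable {V : Type*} {G : SimpleGraph V}

namespace Walk

lemma dist_add_dist_of_mem_support {u v x : V} {p : G.Walk u v}
    (hp : p.length = G.dist u v) (hx : x ∈ p.support) :
    G.dist u x + G.dist x v = G.dist u v := by
  classical
  rw [← length_eq_dist_of_subwalk hp (p.isSubwalk_takeUntil hx),
    ← length_eq_dist_of_subwalk hp (p.isSubwalk_dropUntil hx), ← length_append,
    take_spec, hp]

lemma dist_add_dist_of_mem_support_of_dist_le {u v x y : V} {p : G.Walk u v}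
    (hp : p.length = G.dist u v) (hx : x ∈ p.support) (hy : y ∈ p.support)
    (hxy : G.dist u x ≤ G.dist u y) : G.dist u x + G.dist x y = G.dist u y := by
  classical
  have hsplit : x ∈ ((p.takeUntil y hy).append (p.dropUntil y hy)).support := by
    rwa [take_spec]
  rcases (mem_support_append_iff _ _).mp hsplit with hx' | hx'
  · exact dist_add_dist_of_mem_support
      (length_eq_dist_of_subwalk hp (p.isSubwalk_takeUntil hy)) hx'
  · have hyx := dist_add_dist_of_mem_support
      (length_eq_dist_of_subwalk hp (p.isSubwalk_dropUntil hy)) hx'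
    have := dist_add_dist_of_mem_support hp hx
    have := dist_add_dist_of_mem_support hp hy
    have : G.dist x y = G.dist y x := dist_comm
    omega

lemma dist_getVert_of_length_eq_dist {u v : V} {p : G.Walk u v}
    (hp : p.length = G.dist u v) {i : ℕ} (hi : i ≤ p.length) : G.dist u (p.getVert i) = i := by
  rw [← length_eq_dist_of_subwalk hp (p.isSubwalk_take i), take_length]
  omega

lemma nonempty_iso_pathGraph [Fintype V] {u v : V} {p : G.Walk u v}
    (hp : p.length = G.dist u v) (hspan : ∀ x, x ∈ p.support) :
    Nonempty (G ≃g pathGraph (Fintype.card V)) := by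
  classical
  have hcard : Fintype.card V = p.length + 1 := by
    rw [← p.length_support,
      ← List.toFinset_card_of_nodup (p.isPath_of_length_eq_dist hp).support_nodup, ← Finset.card_univ]
    congr
    ext x
    simp [hspan]
  have hlen (i : Fin (Fintype.card V)) : (i : ℕ) ≤ p.length := by omega
  have hdist (i : Fin (Fintype.card V)) : G.dist u (p.getVert i) = i :=
    p.dist_getVert_of_length_eq_dist hp (hlen i)
  have hbij : Function.Bijective fun i : Fin (Fintype.card V) => p.getVert i := by
    refine ⟨fun i j hij => Fin.ext ?_, fun x => ?_⟩
    · rw [← hdist i, ← hdist j]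
      exact congrArg _ hij
    · obtain ⟨i, rfl, hi⟩ := mem_support_iff_exists_getVert.mp (hspan x)
      exact ⟨⟨i, by omega⟩, rfl⟩
  refine ⟨(⟨Equiv.ofBijective _ hbij, fun {i j} => ?_⟩ : pathGraph _ ≃g G).symm⟩
  simp only [Equiv.ofBijective_apply, pathGraph_adj]
  constructor
  · intro h
    have h1 := dist_eq_one_iff_adj.mpr h
    have h2 := dist_eq_one_iff_adj.mpr h.symm
    rcases le_total (G.dist u (p.getVert i)) (G.dist u (p.getVert j)) with hij | hij <;>
    · have := p.dist_add_dist_of_mem_support_of_dist_le hp (p.getVert_mem_support _)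
        (p.getVert_mem_support _) hij
      simp only [hdist, h1, h2] at this
      omega
  · rintro (h | h)
    · exact h ▸ p.adj_getVert_succ (by have := hlen j; omega)
    · exact (h ▸ p.adj_getVert_succ (by have := hlen i; omega)).symm

lemma IsPath.append {u v w : V} {p : G.Walk u v} {q : G.Walk v w} (hp : p.IsPath)
    (hq : q.IsPath) (hpq : ∀ x ∈ p.support, x ∈ q.support → x = v) : (p.append q).IsPath := by
  rw [isPath_def, support_append, List.nodup_append]
  refine ⟨hp.support_nodup, hq.support_nodup.sublist q.support.tail_sublist, ?_⟩
  rintro x hxp y hyq rfl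
  have hnodup := hq.support_nodup
  rw [← cons_tail_support, List.nodup_cons] at hnodup
  exact hnodup.1 (hpq x hxp (List.mem_of_mem_tail hyq) ▸ hyq)

lemma IsPath.eq_or_eq_of_degree_eq_one {u w v : V} [Fintype (G.neighborSet v)]
    {p : G.Walk u w} (hp : p.IsPath) (hv : G.degree v = 1) (hvp : v ∈ p.support) :
    v = u ∨ v = w := by
  by_contra! h
  obtain ⟨q, r, -, -, rfl⟩ := hp.mem_support_iff_exists_append.mp hvp
  have hq : ¬q.Nil := not_nil_of_ne h.1.symm
  have hr : ¬r.Nil := not_nil_of_ne h.2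
  obtain ⟨z, -, hz⟩ := degree_eq_one_iff_existsUnique_adj.mp hv
  exact hp.ne_of_mem_support_of_append (r.adj_snd hr).ne' (q.getVert_mem_support _)
    (r.getVert_mem_support _) ((hz _ (q.adj_penultimate hq).symm).trans (hz _ (r.adj_snd hr)).symm)

end Walk

lemma dist_comap_subtype_val_of_degree_eq_one {v : V} [Fintype (G.neighborSet v)]
    (hv : G.degree v = 1) (x y : {w // w ≠ v}) :
    (G.comap (Subtype.val : {w // w ≠ v} → V)).dist x y = G.dist x y := by
  set H := G.comap (Subtype.val : {w // w ≠ v} → V)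
  by_cases hr : G.Reachable x y
  · obtain ⟨p, hp, hpd⟩ := hr.exists_path_of_dist
    have hpv : ∀ z ∈ p.support, z ∈ ({v}ᶜ : Set V) := fun z hz hzv =>
      (hp.eq_or_eq_of_degree_eq_one hv (hzv ▸ hz)).elim (fun h => x.2 h.symm) (fun h => y.2 h.symm)
    let q : H.Walk x y := p.induce {v}ᶜ hpv
    have hq : q.length = p.length := by
      conv_rhs => rw [← p.map_induce hpv]
      exact (Walk.length_map _ _).symm
    obtain ⟨r, hrd⟩ := q.reachable.exists_walk_length_eq_dist
    apply le_antisymm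
    · exact (dist_le q).trans (hq.trans hpd).le
    · rw [← hrd, ← r.length_map (Hom.comap _ G)]
      exact dist_le _
  · rw [dist_eq_zero_of_not_reachable hr,
      dist_eq_zero_of_not_reachable fun ⟨r⟩ => hr ⟨r.map (Hom.comap _ G)⟩]

lemma eccentricity_comap_subtype_val [Fintype V] [DecidableEq V] {v : V}
    (hdist : ∀ x y : {w // w ≠ v}, (G.comap Subtype.val).dist x y = G.dist x y)
    {u : {w // w ≠ v}} (hu : ∃ w ≠ v, G.dist u v ≤ G.dist u w) :
    eccentricity G u = eccentricity (G.comap Subtype.val) u := by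
  simp only [eccentricity, hdist]
  refine le_antisymm (Finset.sup_le fun x _ => ?_) (Finset.sup_le fun w _ => ?_)
  · by_cases hx : x = v
    · obtain ⟨w, hw, hle⟩ := hu
      rw [hx]
      exact hle.trans (Finset.le_sup (f := fun w : {w // w ≠ v} => G.dist u w)
        (Finset.mem_univ ⟨w, hw⟩))
    · exact Finset.le_sup (f := fun w : {w // w ≠ v} => G.dist u w) (Finset.mem_univ ⟨x, hx⟩)
  · exact Finset.le_sup (f := G.dist u) (Finset.mem_univ w.val)

lemma IsAcyclic.length_eq_dist (hG : G.IsAcyclic) {u v : V} {p : G.Walk u v} (hp : p.IsPath) :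
    p.length = G.dist u v := by
  obtain ⟨q, hq, hqd⟩ := p.reachable.exists_path_of_dist
  rw [← hqd, Subtype.mk.inj (hG.subsingleton_path u v |>.elim ⟨p, hp⟩ ⟨q, hq⟩)]

lemma IsAcyclic.exists_mem_support_dist_eq_add (hG : G.IsAcyclic) {a b : V} {p : G.Walk a b}
    (hp : p.IsPath) {u : V} (hu : G.Reachable u a) :
    ∃ m ∈ p.support, G.dist u a = G.dist u m + G.dist m a ∧
      G.dist u b = G.dist u m + G.dist m b := by
  classical
  obtain ⟨m, hm, hmin⟩ := p.support.toFinset.exists_min_image (G.dist u) ⟨a, by simp⟩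
  rw [List.mem_toFinset] at hm
  obtain ⟨q, hq, hqd⟩ := (hu.trans (p.takeUntil m hm).reachable).exists_path_of_dist
  -- `m` is the vertex of `p` nearest to `u`, so a geodesic from `u` to `m` meets `p` only at `m`.
  have extend : ∀ {x} (r : G.Walk m x), r.IsPath → (∀ y ∈ r.support, y ∈ p.support) →
      G.dist u x = G.dist u m + G.dist m x := by
    intro x r hr hrp
    have hqr : (q.append r).IsPath := hq.append hr fun y hyq hyr => by
      have hy := q.dist_add_dist_of_mem_support hqd hyq
      have := hmin y (List.mem_toFinset.mpr (hrp y hyr))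
      exact ((q.dropUntil y hyq).reachable.dist_eq_zero_iff).mp (by omega)
    rw [← hG.length_eq_dist hqr, Walk.length_append, hqd, hG.length_eq_dist hr]
  refine ⟨m, hm, extend _ (hp.takeUntil hm).reverse fun y hy => ?_,
    extend _ (hp.dropUntil hm) fun y hy => p.support_dropUntil_subset_support hm hy⟩
  rw [Walk.support_reverse, List.mem_reverse] at hy
  exact p.support_takeUntil_subset_support hm hy

lemma IsTree.dist_le_max_of_forall_dist_le (hG : G.IsTree) {a b : V}
    (hab : ∀ x y, G.dist x y ≤ G.dist a b) (u w : V) :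
    G.dist u w ≤ max (G.dist u a) (G.dist u b) := by
  classical
  obtain ⟨p, hp, hpd⟩ := hG.connected.exists_path_of_dist a b
  obtain ⟨m, hm, hua, hub⟩ := hG.isAcyclic.exists_mem_support_dist_eq_add hp (hG.connected u a)
  obtain ⟨m', hm', hwa, hwb⟩ := hG.isAcyclic.exists_mem_support_dist_eq_add hp (hG.connected w a)
  have hmab := p.dist_add_dist_of_mem_support hpd hm
  have hm'ab := p.dist_add_dist_of_mem_support hpd hm'
  have : G.dist u w ≤ G.dist u m + G.dist m w := hG.connected.dist_triangle
  have : G.dist m w ≤ G.dist m m' + G.dist m' w := hG.connected.dist_triangle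
  have := hab w a
  have := hab w b
  have : G.dist m a = G.dist a m := dist_comm
  have : G.dist m' a = G.dist a m' := dist_comm
  have : G.dist m' w = G.dist w m' := dist_comm
  rcases le_total (G.dist a m) (G.dist a m') with h | h
  · have := p.dist_add_dist_of_mem_support_of_dist_le hpd hm hm' h
    omega
  · have := p.dist_add_dist_of_mem_support_of_dist_le hpd hm' hm h
    have : G.dist m' m = G.dist m m' := dist_comm
    omega

lemma IsTree.exists_degree_eq_one_notMem_support [Fintype V] [DecidableRel G.Adj]
    (hG : G.IsTree) {a b y : V} {p : G.Walk a b} (hp : p.IsPath) (hy : y ∉ p.support) :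
    ∃ v, G.degree v = 1 ∧ v ∉ p.support := by
  classical
  obtain ⟨v, hv, hmax⟩ := (Finset.univ.filter (· ∉ p.support)).exists_max_image (G.dist a)
    ⟨y, by simpa using hy⟩
  obtain ⟨-, hv⟩ := Finset.mem_filter.mp hv
  refine ⟨v, ?_, hv⟩
  -- `v` is a vertex off `p` farthest from `a`. A neighbour `z` of `v` beyond `v` would be farther
  -- from `a`, hence on `p`; but then the path from `a` to `z` inside `p` would pass through `v`.
  obtain ⟨q, hq⟩ := hG.connected.exists_isPath a v
  have hqn : ¬q.Nil := Walk.not_nil_of_ne fun h => hv (h ▸ p.start_mem_support)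
  rw [degree_eq_one_iff_existsUnique_adj]
  refine ⟨q.penultimate, (q.adj_penultimate hqn).symm, fun z hz => ?_⟩
  obtain ⟨r, hr, hrd⟩ := hG.connected.exists_path_of_dist a z
  by_cases hvr : v ∈ r.support
  · have hlt : G.dist a v < G.dist a z := by
      have := r.dist_add_dist_of_mem_support hrd hvr
      have := hG.connected.pos_dist_of_ne hz.ne
      omega
    by_cases hzp : z ∈ p.support
    · have hrp : r = p.takeUntil z hzp := Subtype.mk.inj <|
        (hG.isAcyclic.subsingleton_path a z).elim ⟨r, hr⟩ ⟨_, hp.takeUntil hzp⟩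
      exact absurd (p.support_takeUntil_subset_support hzp (hrp ▸ hvr)) hv
    · exact absurd (hmax z (by simpa using hzp)) hlt.not_ge
  · exact hG.isAcyclic.eq_penultimate_of_adj_end hq hz
      (hG.isAcyclic.mem_support_of_ne_mem_support_of_adj_of_isPath hq hr hz hvr)

end SimpleGraph

/-- If `T` is a tree on `n` vertices not isomorphic to the path `Pₙ`, then there exists a
pendant vertex `v` such that every other vertex has the same eccentricity in `T - v`
as in `T`. -/
theorem exists_pendant_eccentricity_eq {V : Type*} [Fintype V] [DecidableEq V]
    (T : SimpleGraph V) [DecidableRel T.Adj] (hT : T.IsTree)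
    (hnotpath : ¬ Nonempty (T ≃g SimpleGraph.pathGraph (Fintype.card V))) :
    ∃ v : V, T.degree v = 1 ∧
      ∀ u : {x : V // x ≠ v},
        eccentricity T (u : V) = eccentricity (T.comap (Subtype.val : {x : V // x ≠ v} → V)) u := by
  have : Nonempty V := hT.connected.nonempty
  obtain ⟨a, b, hab⟩ := T.exists_dist_eq_diam
  have hdiam (x y : V) : T.dist x y ≤ T.dist a b :=
    hab ▸ dist_le_diam (connected_iff_ediam_ne_top.mp hT.connected)
  obtain ⟨p, hp, hpd⟩ := hT.connected.exists_path_of_dist a b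
  obtain ⟨y, hy⟩ : ∃ y, y ∉ p.support := by
    by_contra! hspan
    exact hnotpath (p.nonempty_iso_pathGraph hpd hspan)
  obtain ⟨v, hv, hvp⟩ := hT.exists_degree_eq_one_notMem_support hp hy
  refine ⟨v, hv, fun u => eccentricity_comap_subtype_val
    (dist_comap_subtype_val_of_degree_eq_one hv) ?_⟩
  rcases le_max_iff.mp (hT.dist_le_max_of_forall_dist_le hdiam u v) with h | h
  · exact ⟨a, fun h => hvp (h ▸ p.start_mem_support), h⟩
  · exact ⟨b, fun h => hvp (h ▸ p.end_mem_support), h⟩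
end
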